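/- arXiv:quant-ph/9908033 — 2 statements merged into one kernel-verified Lean document; each statement's English description precedes it below -/
import Mathlib

section
/- Let H be a complex Hilbert space, Q : H →L[ℂ] H self-adjoint (IsSelfAdjoint Q), and P : H →ₗ.[ℂ] H a symmetric, densely defined unbounded operator. Let D_c be a submodule of H contained in P.domain such that: (1) Q maps D_c into D_c; (2) Q (P φ) − P (Q φ) = Complex.I • φ for all φ ∈ D_c; (3) the graph {(φ, P φ) : φ ∈ D_c} is closed in H × H; (4) D_c is dense in H. Suppose β' : ℝ is such that for every φ ∈ P.domain with φ ∉ D_c, U_{β'} φ ∈ P.domain and U_{β'} φ ∉ D_c. Then for every φ ∈ P.domain with φ ∉ D_c, U_{β'} (P φ) − P (U_{β'} φ) = (β' : ℂ) • U_{β'} φ, where U_{β'} = exp (−(Complex.I * β') • Q). -/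
open scoped ComplexInnerProductSpace

/-- The unitary group element `U_β = exp(-(i β) Q)`. -/
noncomputable def Uop {H : Type*} [NormedAddCommGroup H] [InnerProductSpace ℂ H]
    [CompleteSpace H] (Q : H →L[ℂ] H) (β : ℝ) : H →L[ℂ] H :=
  NormedSpace.exp ((-(Complex.I * (β : ℂ))) • Q)

/-!
The commutation relation `Q P - P Q = i` on `D_c` says that the graph `G ⊆ H × H` of `P`
restricted to `D_c` is invariant under the bounded block operator `(x, y) ↦ (Q x, Q y - i x)`.
Since `G` is a closed subspace, it is also invariant under the exponential of `-iβ` times this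
operator, which is `(x, y) ↦ (U_β x, U_β y - β U_β x)` because its off-diagonal part squares to
zero. So `U_β` maps `D_c` into itself and `P U_β = U_β P - β U_β` there (the Weyl relation).
For `φ` in the domain of `P`, pair the claimed identity with `η ∈ D_c`: moving `U_β'` across as
`U_β'^* = U_{-β'}` and `P` across by symmetry reduces it to the Weyl relation at `U_{-β'} η`,
and density of `D_c` finishes the proof.
-/

open NormedSpace

theorem NormedSpace.exp_eq_one_add_of_mul_self_eq_zero {𝔸 : Type*} [Ring 𝔸] [Algebra ℚ 𝔸]
    [TopologicalSpace 𝔸] [IsTopologicalRing 𝔸] [T2Space 𝔸] {x : 𝔸} (hx : x * x = 0) :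
    exp x = 1 + x := by
  have hvanish : ∀ n ∉ Finset.range 2, (n.factorial⁻¹ : ℚ) • x ^ n = 0 := by
    intro n hn
    obtain ⟨k, rfl⟩ : ∃ k, n = k + 2 := ⟨n - 2, by rw [Finset.mem_range] at hn; omega⟩
    rw [pow_add, sq, hx, mul_zero, smul_zero]
  simp only [exp_eq_tsum_rat]
  rw [tsum_eq_sum hvanish]
  simp [Finset.sum_range_succ]

theorem NormedSpace.exp_apply_mem_of_mapsTo {𝕜 E : Type*} [RCLike 𝕜] [NormedAddCommGroup E]
    [NormedSpace 𝕜 E] [CompleteSpace E] {S : Submodule 𝕜 E} (hS : IsClosed (S : Set E))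
    {A : E →L[𝕜] E} (hA : Set.MapsTo A S S) {x : E} (hx : x ∈ S) : exp A x ∈ S := by
  have hsum : HasSum (fun n => (n.factorial⁻¹ : 𝕜) • (A ^ n) x) (exp A x) := by
    simpa using (exp_series_hasSum_exp' (𝕂 := 𝕜) A).mapL (ContinuousLinearMap.apply 𝕜 E x)
  rw [← hsum.tsum_eq]
  refine tsum_mem hS fun n => S.smul_mem _ ?_
  simpa [FunLike.coe_pow_eq_iterate] using (hA.iterate n) hx

namespace ContinuousLinearMap

variable {𝕜 E F : Type*} [RCLike 𝕜] [NormedAddCommGroup E] [NormedSpace 𝕜 E]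
  [NormedAddCommGroup F] [NormedSpace 𝕜 F]

noncomputable def blockJordan (A : E →L[𝕜] E) (s : 𝕜) : E × E →L[𝕜] E × E :=
  A.prodMap A + s • (inr 𝕜 E E).comp (fst 𝕜 E E)

@[simp]
theorem blockJordan_apply (A : E →L[𝕜] E) (s : 𝕜) (z : E × E) :
    blockJordan A s z = (A z.1, A z.2 + s • z.1) := by
  ext <;> simp [blockJordan]

theorem smul_blockJordan (c : 𝕜) (A : E →L[𝕜] E) (s : 𝕜) :
    c • blockJordan A s = blockJordan (c • A) (c * s) := by
  ext z <;> simp [mul_smul]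

variable [CompleteSpace E] [CompleteSpace F]

theorem comp_exp_of_comp_eq {A : E →L[𝕜] E} {B : F →L[𝕜] F} {L : E →L[𝕜] F}
    (h : L.comp A = B.comp L) : L.comp (exp A) = (exp B).comp L := by
  have hpow : ∀ n : ℕ, L.comp (A ^ n) = (B ^ n).comp L := by
    intro n
    induction n with
    | zero => rfl
    | succ n ih =>
      rw [pow_succ, pow_succ, mul_def, mul_def, ← comp_assoc, ih, comp_assoc, h, comp_assoc]
  have hA := (exp_series_hasSum_exp' (𝕂 := 𝕜) A).mapL (compL 𝕜 E E F L)
  have hB := (exp_series_hasSum_exp' (𝕂 := 𝕜) B).mapL ((compL 𝕜 E F F).flip L)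
  refine hA.unique ?_
  simpa [hpow] using hB

theorem exp_prodMap (A : E →L[𝕜] E) (B : F →L[𝕜] F) :
    exp (A.prodMap B) = (exp A).prodMap (exp B) := by
  have hfst := comp_exp_of_comp_eq (L := fst 𝕜 E F) (A := A.prodMap B) (B := A) rfl
  have hsnd := comp_exp_of_comp_eq (L := snd 𝕜 E F) (A := A.prodMap B) (B := B) rfl
  exact ext fun z => Prod.ext congr($hfst z) congr($hsnd z)

theorem exp_blockJordan_apply (A : E →L[𝕜] E) (s : 𝕜) (z : E × E) :
    exp (blockJordan A s) z = (exp A z.1, exp A (z.2 + s • z.1)) := by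
  -- `exp_add_of_commute` is stated for `ℚ`-algebras, and there is no such instance here
  let +nondep : NormedAlgebra ℚ (E × E →L[𝕜] E × E) := .restrictScalars ℚ 𝕜 _
  set N := s • (inr 𝕜 E E).comp (fst 𝕜 E E)
  have hN : N * N = 0 := by ext z <;> simp [N]
  have hcomm : Commute (A.prodMap A) N := by ext z <;> simp [N]
  rw [blockJordan, exp_add_of_commute hcomm, exp_prodMap, exp_eq_one_add_of_mul_self_eq_zero hN]
  ext <;> simp [N]

end ContinuousLinearMap

namespace LinearPMap

theorem coe_graph_domRestrict_of_le {R E F : Type*} [Ring R] [AddCommGroup E] [Module R E]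
    [AddCommGroup F] [Module R F] {f : E →ₗ.[R] F} {S : Submodule R E} (hS : S ≤ f.domain) :
    ((f.domRestrict S).graph : Set (E × F)) = {p | ∃ h : p.1 ∈ S, f ⟨p.1, hS h⟩ = p.2} := by
  ext ⟨x, y⟩
  rw [SetLike.mem_coe, mem_graph_iff]
  constructor
  · rintro ⟨⟨x, hxS, hxf⟩, rfl, rfl⟩
    exact ⟨hxS, rfl⟩
  · rintro ⟨h, hxy⟩
    exact ⟨⟨x, h, hS h⟩, rfl, hxy⟩

variable {E : Type*} [NormedAddCommGroup E] [NormedSpace ℂ E] [CompleteSpace E]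

theorem IsClosed.weyl_relation {T : E →ₗ.[ℂ] E} (hT : T.IsClosed) {Q : E →L[ℂ] E}
    (hQ : ∀ φ ∈ T.domain, Q φ ∈ T.domain)
    (hccr : ∀ φ (hφ : φ ∈ T.domain), Q (T ⟨φ, hφ⟩) - T ⟨Q φ, hQ φ hφ⟩ = Complex.I • φ)
    (β : ℝ) {φ : E} (hφ : φ ∈ T.domain) :
    ∃ h : exp (-(Complex.I * β) • Q) φ ∈ T.domain,
      T ⟨_, h⟩ = exp (-(Complex.I * β) • Q) (T ⟨φ, hφ⟩)
        - (β : ℂ) • exp (-(Complex.I * β) • Q) φ := by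
  set c : ℂ := -(Complex.I * β)
  have hmaps : Set.MapsTo (ContinuousLinearMap.blockJordan Q (-Complex.I)) T.graph T.graph := by
    rintro ⟨x, y⟩ hz
    obtain ⟨ψ, rfl, rfl⟩ := T.mem_graph_iff.mp hz
    have hB : ContinuousLinearMap.blockJordan Q (-Complex.I) (ψ, T ψ)
        = (Q ψ, T ⟨Q ψ, hQ ψ ψ.2⟩) := by
      rw [ContinuousLinearMap.blockJordan_apply]
      dsimp only
      rw [neg_smul, ← sub_eq_add_neg, ← hccr ψ ψ.2, sub_sub_cancel]
    rw [hB]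
    exact T.mem_graph ⟨Q ψ, hQ ψ ψ.2⟩
  have hmem := exp_apply_mem_of_mapsTo hT (A := c • _)
    (fun z hz => T.graph.smul_mem c (hmaps hz)) (T.mem_graph ⟨φ, hφ⟩)
  rw [ContinuousLinearMap.smul_blockJordan, ContinuousLinearMap.exp_blockJordan_apply] at hmem
  have hcI : c * -Complex.I = -β := by
    linear_combination (β : ℂ) * Complex.I_sq
  refine ⟨mem_domain_of_mem_graph hmem, ((image_iff _).mpr hmem).symm.trans ?_⟩
  dsimp only
  rw [hcI, ContinuousLinearMap.map_add, ContinuousLinearMap.map_smul, neg_smul (β : ℂ),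
    sub_eq_add_neg]

end LinearPMap

section Uop

variable {H : Type*} [NormedAddCommGroup H] [InnerProductSpace ℂ H] [CompleteSpace H]
  {Q : H →L[ℂ] H}

theorem adjoint_Uop (hQ : IsSelfAdjoint Q) (β : ℝ) :
    ContinuousLinearMap.adjoint (Uop Q β) = Uop Q (-β) := by
  rw [← ContinuousLinearMap.star_eq_adjoint, Uop, star_exp, Uop, star_smul, hQ.star_eq]
  congr 2
  simp

theorem inner_Uop_neg_left (hQ : IsSelfAdjoint Q) (β : ℝ) (x y : H) :
    ⟪Uop Q (-β) x, y⟫ = ⟪x, Uop Q β y⟫ := by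
  rw [← adjoint_Uop hQ, ContinuousLinearMap.adjoint_inner_left]

end Uop

theorem unitary_commutation_outside_canonical_domain_general
    {H : Type*} [NormedAddCommGroup H] [InnerProductSpace ℂ H] [CompleteSpace H]
    (Q : H →L[ℂ] H) (hQ : IsSelfAdjoint Q)
    (P : H →ₗ.[ℂ] H)
    (hPsymm : ∀ x y : P.domain, ⟪P x, (y : H)⟫ = ⟪(x : H), P y⟫)
    (Dc : Submodule ℂ H) (hDc : Dc ≤ P.domain)
    (hQDc : ∀ φ ∈ Dc, Q φ ∈ Dc)
    (hccr : ∀ φ (hφ : φ ∈ Dc),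
      Q (P ⟨φ, hDc hφ⟩) - P ⟨Q φ, hDc (hQDc φ hφ)⟩ = Complex.I • φ)
    (hclosed : IsClosed {p : H × H | ∃ hp : p.1 ∈ Dc, P ⟨p.1, hDc hp⟩ = p.2})
    (hDcdense : Dense (Dc : Set H))
    (β' : ℝ)
    (hinv : ∀ φ : H, (hφ : φ ∈ P.domain) → φ ∉ Dc →
      Uop Q β' φ ∈ P.domain ∧ Uop Q β' φ ∉ Dc) :
    ∀ φ : H, ∀ hφ : φ ∈ P.domain, ∀ hn : φ ∉ Dc,
      Uop Q β' (P ⟨φ, hφ⟩) - P ⟨Uop Q β' φ, (hinv φ hφ hn).1⟩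
        = ((β' : ℂ)) • (Uop Q β' φ) := by
  intro φ hφ hn
  have hT : (P.domRestrict Dc).IsClosed := by
    rwa [LinearPMap.IsClosed, LinearPMap.coe_graph_domRestrict_of_le hDc]
  refine hDcdense.eq_of_inner_right ℂ fun η hη => ?_
  obtain ⟨hUη, hPUη⟩ := hT.weyl_relation (fun ψ hψ => ⟨hQDc ψ hψ.1, hDc (hQDc ψ hψ.1)⟩)
    (fun ψ hψ => hccr ψ hψ.1) (-β') (φ := η) ⟨hη, hDc hη⟩
  have hPUη' : P ⟨Uop Q (-β') η, hUη.2⟩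
      = Uop Q (-β') (P ⟨η, hDc hη⟩) - ((-β' : ℝ) : ℂ) • Uop Q (-β') η := hPUη
  have key : ⟪η, Uop Q β' (P ⟨φ, hφ⟩)⟫
      = ⟪η, P ⟨Uop Q β' φ, (hinv φ hφ hn).1⟩⟫ + β' * ⟪η, Uop Q β' φ⟫ :=
    calc ⟪η, Uop Q β' (P ⟨φ, hφ⟩)⟫ = ⟪Uop Q (-β') η, P ⟨φ, hφ⟩⟫ :=
          (inner_Uop_neg_left hQ _ _ _).symm
      _ = ⟪P ⟨Uop Q (-β') η, hUη.2⟩, φ⟫ := (hPsymm ⟨_, hUη.2⟩ ⟨φ, hφ⟩).symm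
      _ = ⟪P ⟨η, hDc hη⟩, Uop Q β' φ⟫ + β' * ⟪η, Uop Q β' φ⟫ := by
          rw [hPUη', inner_sub_left, inner_smul_left, inner_Uop_neg_left hQ,
            inner_Uop_neg_left hQ]
          simp [sub_eq_add_neg]
      _ = ⟪η, P ⟨Uop Q β' φ, (hinv φ hφ hn).1⟩⟫ + β' * ⟪η, Uop Q β' φ⟫ := by
          rw [hPsymm ⟨η, hDc hη⟩ ⟨_, (hinv φ hφ hn).1⟩]
  rw [inner_sub_right, inner_smul_right, key]
  ring

theorem unitary_commutation_outside_canonical_domain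
    {H : Type*} [NormedAddCommGroup H] [InnerProductSpace ℂ H] [CompleteSpace H]
    (Q : H →L[ℂ] H) (hQ : IsSelfAdjoint Q)
    (P : H →ₗ.[ℂ] H)
    (hPsymm : ∀ x y : P.domain, ⟪P x, (y : H)⟫ = ⟪(x : H), P y⟫)
    (hPdense : Dense (P.domain : Set H))
    (Dc : Submodule ℂ H) (hDc : Dc ≤ P.domain)
    (hQDc : ∀ φ ∈ Dc, Q φ ∈ Dc)
    (hccr : ∀ φ (hφ : φ ∈ Dc),
      Q (P ⟨φ, hDc hφ⟩) - P ⟨Q φ, hDc (hQDc φ hφ)⟩ = Complex.I • φ)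
    (hclosed : IsClosed {p : H × H | ∃ hp : p.1 ∈ Dc, P ⟨p.1, hDc hp⟩ = p.2})
    (hDcdense : Dense (Dc : Set H))
    (β' : ℝ)
    (hinv : ∀ φ : H, (hφ : φ ∈ P.domain) → φ ∉ Dc →
      Uop Q β' φ ∈ P.domain ∧ Uop Q β' φ ∉ Dc) :
    ∀ φ : H, ∀ hφ : φ ∈ P.domain, ∀ hn : φ ∉ Dc,
      Uop Q β' (P ⟨φ, hφ⟩) - P ⟨Uop Q β' φ, (hinv φ hφ hn).1⟩
        = ((β' : ℂ)) • (Uop Q β' φ) :=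
  unitary_commutation_outside_canonical_domain_general Q hQ P hPsymm Dc hDc hQDc hccr hclosed
    hDcdense β' hinv
end

section
/- Let H be a complex Hilbert space, Q : H →L[ℂ] H self-adjoint (IsSelfAdjoint Q), and P : H →ₗ.[ℂ] H a symmetric, densely defined unbounded operator. Let D_c be a submodule of H contained in P.domain such that: (1) Q maps D_c into D_c; (2) Q (P φ) − P (Q φ) = Complex.I • φ for all φ ∈ D_c; (3) the graph {(φ, P φ) : φ ∈ D_c} is closed in H × H; (4) D_c is dense in H. Suppose P has at least one eigenvalue and the set of real eigenvalues of P, {p : ℝ | ∃ φ ∈ P.domain, φ ≠ 0 ∧ P φ = (p : ℂ) • φ}, is bounded below. Then for every β₀ : ℝ with β₀ ≠ 0, it is not the case that both β₀ and −β₀ are invariance parameters. (If P has a semibounded point spectrum, the invariance parameter set contains no nonzero symmetric pair; in particular Pauli's conclusion fails for such P.) -/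
/-!
Closedness of the graph of `P` on `D_c` and the commutation relation `[Q, P] = i` let one push `P`
through the exponential series term by term: `U_β` maps `D_c` into itself and
`P U_β = U_β (P - β)` there. Since `U_β` is unitary with `U_β* = U_{-β}`, `P` is symmetric and
`D_c` is dense, the same identity holds weakly at every `φ ∈ dom P` with `U_β φ ∈ dom P`. If
`β > 0` is an invariance parameter, `U_β φ` stays in `dom P` for every eigenvector `φ` (inside
`D_c` by the first step, outside it by invariance), so `U_β` lowers eigenvalues by `β`; starting
from one eigenvalue `p₀` this produces the eigenvalues `p₀ - nβ`, which are not bounded below.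
Of `β₀` and `-β₀` one is positive.
-/

open scoped ComplexInnerProductSpace

/-- `β` is an invariance parameter: `U_β` maps `P.domain \ D_c` into itself. -/
def IsInvParam {H : Type*} [NormedAddCommGroup H] [InnerProductSpace ℂ H]
    [CompleteSpace H] (Q : H →L[ℂ] H) (P : H →ₗ.[ℂ] H) (Dc : Submodule ℂ H)
    (β : ℝ) : Prop :=
  ∀ φ : H, φ ∈ P.domain → φ ∉ Dc → Uop Q β φ ∈ P.domain ∧ Uop Q β φ ∉ Dc

theorem not_bddBelow_of_forall_sub_mem {α : Type*} [AddCommGroup α] [LinearOrder α]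
    [IsOrderedAddMonoid α] [Archimedean α] {s : Set α} {a β : α} (hβ : 0 < β) (ha : a ∈ s)
    (hs : ∀ p ∈ s, p - β ∈ s) : ¬BddBelow s := by
  rintro ⟨b, hb⟩
  have hmem (n : ℕ) : a - n • β ∈ s := by
    induction n with
    | zero => simpa
    | succ n ih => rw [succ_nsmul, ← sub_sub]; exact hs _ ih
  obtain ⟨n, hn⟩ := Archimedean.arch (a - b + β) hβ
  have hle : n • β ≤ a - b := le_sub_comm.mp (hb (hmem n))
  exact hβ.not_ge ((add_le_iff_nonpos_right _).mp (hn.trans hle))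

section ExpSeries

open NormedSpace

variable {𝕜 E : Type*} [RCLike 𝕜] [NormedAddCommGroup E] [NormedSpace 𝕜 E] [CompleteSpace E]

theorem hasSum_exp_smul_apply (c : 𝕜) (Q : E →L[𝕜] E) (x : E) :
    HasSum (fun n : ℕ => ((n.factorial : 𝕜)⁻¹ * c ^ n) • (Q ^ n) x) (exp (c • Q) x) := by
  simpa [smul_pow, mul_smul] using
    (exp_series_hasSum_exp' (𝕂 := 𝕜) (c • Q)).mapL (ContinuousLinearMap.apply 𝕜 E x)

theorem hasSum_exp_smul_apply_pow_pred (c : 𝕜) (Q : E →L[𝕜] E) (x : E) :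
    HasSum (fun n : ℕ => ((n.factorial : 𝕜)⁻¹ * c ^ n * n) • (Q ^ (n - 1)) x)
      (c • exp (c • Q) x) := by
  rw [← hasSum_nat_add_iff' 1]
  have hcoeff (n : ℕ) : ((n + 1).factorial : 𝕜)⁻¹ * c ^ (n + 1) * (n + 1 : ℕ) =
      c * ((n.factorial : 𝕜)⁻¹ * c ^ n) := by
    rw [Nat.factorial_succ]; push_cast; field_simp; ring
  simp only [Finset.range_one, Finset.sum_singleton, Nat.cast_zero, mul_zero, zero_smul, sub_zero]
  refine ((hasSum_exp_smul_apply c Q x).const_smul c).congr_fun fun n => ?_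
  rw [Nat.add_sub_cancel, hcoeff, mul_smul]

end ExpSeries

namespace LinearPMap

theorem mem_graph_domRestrict_iff {R E F : Type*} [Ring R] [AddCommGroup E] [Module R E]
    [AddCommGroup F] [Module R F] {f : E →ₗ.[R] F} {S : Submodule R E} (hS : S ≤ f.domain)
    {p : E × F} : p ∈ (f.domRestrict S).graph ↔ ∃ hp : p.1 ∈ S, f ⟨p.1, hS hp⟩ = p.2 := by
  obtain ⟨a, b⟩ := p
  rw [mem_graph_iff]
  constructor
  · rintro ⟨y, rfl, rfl⟩
    exact ⟨y.2.1, (domRestrict_apply rfl).symm⟩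
  · rintro ⟨ha, hb⟩
    exact ⟨⟨a, ha, hS ha⟩, rfl, (domRestrict_apply rfl).trans hb⟩

theorem IsClosed.mem_graph_of_hasSum {R E F ι : Type*} [CommRing R] [AddCommGroup E]
    [Module R E] [AddCommGroup F] [Module R F] [TopologicalSpace E] [TopologicalSpace F]
    [ContinuousAdd E] [ContinuousAdd F] {T : E →ₗ.[R] F} (hT : T.IsClosed) {x : ι → T.domain}
    {a : E} {b : F} (ha : HasSum (fun i => (x i : E)) a) (hb : HasSum (fun i => T (x i)) b) :
    (a, b) ∈ T.graph := by
  refine hT.mem_of_tendsto (ha.prodMk_nhds hb) (Filter.Eventually.of_forall fun s => ?_)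
  rw [SetLike.mem_coe]
  convert T.graph.sum_mem fun i (_ : i ∈ s) => T.mem_graph (x i) using 1
  ext <;> simp [Prod.fst_sum, Prod.snd_sum]

variable {𝕜 E : Type*} [RCLike 𝕜] [NormedAddCommGroup E] [NormedSpace 𝕜 E]
  {T : E →ₗ.[𝕜] E} {Q : E →L[𝕜] E} {μ : 𝕜}

theorem pow_apply_mem_domain (hQ : ∀ x ∈ T.domain, Q x ∈ T.domain) (n : ℕ) {x : E}
    (hx : x ∈ T.domain) : (Q ^ n) x ∈ T.domain := by
  induction n with
  | zero => exact hx
  | succ n ih => rw [pow_succ']; exact hQ _ ih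

theorem apply_pow_apply_of_commutator (hQ : ∀ x ∈ T.domain, Q x ∈ T.domain)
    (hcomm : ∀ x : T.domain, T ⟨Q x, hQ x x.2⟩ = Q (T x) + μ • (x : E)) (n : ℕ) (x : T.domain) :
    T ⟨(Q ^ n) x, pow_apply_mem_domain hQ n x.2⟩ =
      (Q ^ n) (T x) + (n * μ) • (Q ^ (n - 1)) x := by
  induction n with
  | zero => simp
  | succ n ih =>
    have hQpow (k : ℕ) (y : E) : Q ((Q ^ k) y) = (Q ^ (k + 1)) y := by rw [pow_succ']; rfl
    have hsucc : (⟨(Q ^ (n + 1)) x, pow_apply_mem_domain hQ (n + 1) x.2⟩ : T.domain) =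
        ⟨Q ((Q ^ n) x), hQ _ (pow_apply_mem_domain hQ n x.2)⟩ := Subtype.ext (hQpow n x).symm
    rw [hsucc, hcomm ⟨_, pow_apply_mem_domain hQ n x.2⟩, ih, Q.map_add, Q.map_smul, hQpow]
    rcases n with _ | n
    · simp
    · rw [hQpow, Nat.add_sub_cancel, Nat.add_sub_cancel]
      push_cast
      module

open NormedSpace in
theorem IsClosed.exp_smul_mem_graph [CompleteSpace E] (hT : T.IsClosed)
    (hQ : ∀ x ∈ T.domain, Q x ∈ T.domain)
    (hcomm : ∀ x : T.domain, T ⟨Q x, hQ x x.2⟩ = Q (T x) + μ • (x : E)) (c : 𝕜) (x : T.domain) :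
    (exp (c • Q) x, exp (c • Q) (T x) + (c * μ) • exp (c • Q) x) ∈ T.graph := by
  refine hT.mem_graph_of_hasSum
    (x := fun n => ((n.factorial : 𝕜)⁻¹ * c ^ n) • ⟨(Q ^ n) x, pow_apply_mem_domain hQ n x.2⟩)
    ((hasSum_exp_smul_apply c Q x).congr_fun fun n => Submodule.coe_smul _ _) ?_
  have hsum := (hasSum_exp_smul_apply c Q (T x)).add
    ((hasSum_exp_smul_apply_pow_pred c Q x).const_smul μ)
  rw [smul_smul, mul_comm μ c] at hsum
  refine hsum.congr_fun fun n => ?_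
  rw [LinearPMap.map_smul, apply_pow_apply_of_commutator hQ hcomm, smul_add, smul_smul, smul_smul]
  ring_nf

end LinearPMap

section Hilbert

variable {H : Type*} [NormedAddCommGroup H] [InnerProductSpace ℂ H] [CompleteSpace H]
  {Q : H →L[ℂ] H} {P : H →ₗ.[ℂ] H} {Dc : Submodule ℂ H}

theorem star_Uop (hQ : IsSelfAdjoint Q) (β : ℝ) : star (Uop Q β) = Uop Q (-β) := by
  rw [Uop, Uop, NormedSpace.star_exp, star_smul, hQ.star_eq]
  congr 2
  simp

theorem Uop_mem_unitary (hQ : IsSelfAdjoint Q) (β : ℝ) : Uop Q β ∈ unitary (H →L[ℂ] H) := by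
  -- `exp_mem_unitary_of_mem_skewAdjoint` is stated for normed `ℚ`-algebras.
  let : NormedAlgebra ℚ (H →L[ℂ] H) := .restrictScalars ℚ ℂ _
  refine NormedSpace.exp_mem_unitary_of_mem_skewAdjoint (skewAdjoint.mem_iff.mpr ?_)
  rw [star_smul, hQ.star_eq]
  simp

theorem inner_Uop_left (hQ : IsSelfAdjoint Q) (β : ℝ) (x y : H) :
    ⟪Uop Q β x, y⟫ = ⟪x, Uop Q (-β) y⟫ := by
  rw [← star_Uop hQ, ContinuousLinearMap.star_eq_adjoint,
    ContinuousLinearMap.adjoint_inner_right]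

theorem exists_Uop_mem_and_apply (hDc : Dc ≤ P.domain) (hQDc : ∀ φ ∈ Dc, Q φ ∈ Dc)
    (hccr : ∀ φ (hφ : φ ∈ Dc),
      Q (P ⟨φ, hDc hφ⟩) - P ⟨Q φ, hDc (hQDc φ hφ)⟩ = Complex.I • φ)
    (hclosed : IsClosed {p : H × H | ∃ hp : p.1 ∈ Dc, P ⟨p.1, hDc hp⟩ = p.2})
    (β : ℝ) {ψ : H} (hψ : ψ ∈ Dc) :
    ∃ h : Uop Q β ψ ∈ Dc,
      P ⟨Uop Q β ψ, hDc h⟩ = Uop Q β (P ⟨ψ, hDc hψ⟩) - (β : ℂ) • Uop Q β ψ := by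
  have hQT : ∀ x ∈ (P.domRestrict Dc).domain, Q x ∈ (P.domRestrict Dc).domain :=
    fun x hx => ⟨hQDc x hx.1, hDc (hQDc x hx.1)⟩
  have hcomm (x : (P.domRestrict Dc).domain) :
      P.domRestrict Dc ⟨Q x, hQT x x.2⟩ = Q (P.domRestrict Dc x) + (-Complex.I) • (x : H) := by
    have hx : (x : H) ∈ Dc := (Submodule.mem_inf.1 x.2).1
    change P ⟨Q x, hDc (hQDc x hx)⟩ = Q (P ⟨x, hDc hx⟩) + _
    rw [neg_smul, ← hccr x hx]
    abel
  have hT : (P.domRestrict Dc).IsClosed := by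
    rw [LinearPMap.IsClosed]
    convert hclosed using 1
    ext p
    exact LinearPMap.mem_graph_domRestrict_iff hDc
  obtain ⟨h, hP⟩ := (LinearPMap.mem_graph_domRestrict_iff hDc).1
    (hT.exp_smul_mem_graph hQT hcomm (-(Complex.I * β)) ⟨ψ, hψ, hDc hψ⟩)
  have hcoef : -(Complex.I * β) * -Complex.I = -(β : ℂ) := by
    rw [neg_mul_neg, mul_comm, ← mul_assoc, Complex.I_mul_I, neg_one_mul]
  refine ⟨h, hP.trans ?_⟩
  change Uop Q β (P ⟨ψ, hDc hψ⟩) + (-(Complex.I * β) * -Complex.I) • Uop Q β ψ = _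
  rw [hcoef, neg_smul, ← sub_eq_add_neg]

theorem apply_Uop_of_eigen (hQ : IsSelfAdjoint Q)
    (hPsymm : ∀ x y : P.domain, ⟪P x, (y : H)⟫ = ⟪(x : H), P y⟫)
    (hDc : Dc ≤ P.domain) (hQDc : ∀ φ ∈ Dc, Q φ ∈ Dc)
    (hccr : ∀ φ (hφ : φ ∈ Dc),
      Q (P ⟨φ, hDc hφ⟩) - P ⟨Q φ, hDc (hQDc φ hφ)⟩ = Complex.I • φ)
    (hclosed : IsClosed {p : H × H | ∃ hp : p.1 ∈ Dc, P ⟨p.1, hDc hp⟩ = p.2})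
    (hDcdense : Dense (Dc : Set H)) {β p : ℝ} {φ : H} {hφ : φ ∈ P.domain}
    (heig : P ⟨φ, hφ⟩ = (p : ℂ) • φ) (hU : Uop Q β φ ∈ P.domain) :
    P ⟨Uop Q β φ, hU⟩ = ((p - β : ℝ) : ℂ) • Uop Q β φ := by
  refine hDcdense.eq_of_inner_left (𝕜 := ℂ) fun ψ hψ => ?_
  obtain ⟨hψ', hPψ'⟩ := exists_Uop_mem_and_apply hDc hQDc hccr hclosed (-β) hψ
  set ψ' := Uop Q (-β) ψ
  calc ⟪P ⟨Uop Q β φ, hU⟩, ψ⟫ = ⟪Uop Q β φ, P ⟨ψ, hDc hψ⟩⟫ := hPsymm _ ⟨ψ, hDc hψ⟩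
    _ = ⟪φ, Uop Q (-β) (P ⟨ψ, hDc hψ⟩)⟫ := inner_Uop_left hQ β _ _
    _ = ⟪φ, P ⟨ψ', hDc hψ'⟩ - (β : ℂ) • ψ'⟫ := by
      rw [hPψ', Complex.ofReal_neg, neg_smul, sub_neg_eq_add, add_sub_cancel_right]
    _ = ⟪P ⟨φ, hφ⟩, ψ'⟫ - β * ⟪φ, ψ'⟫ := by
      rw [inner_sub_right, inner_smul_right, hPsymm ⟨φ, hφ⟩ ⟨ψ', hDc hψ'⟩]
    _ = (p - β) * ⟪Uop Q β φ, ψ⟫ := by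
      rw [heig, inner_smul_left, Complex.conj_ofReal, inner_Uop_left hQ]
      ring
    _ = ⟪((p - β : ℝ) : ℂ) • Uop Q β φ, ψ⟫ := by
      rw [inner_smul_left, Complex.conj_ofReal, Complex.ofReal_sub]

def realPointSpectrum (P : H →ₗ.[ℂ] H) : Set ℝ :=
  {p : ℝ | ∃ (φ : H) (hφ : φ ∈ P.domain), φ ≠ 0 ∧ P ⟨φ, hφ⟩ = (p : ℂ) • φ}

theorem sub_mem_realPointSpectrum (hQ : IsSelfAdjoint Q)
    (hPsymm : ∀ x y : P.domain, ⟪P x, (y : H)⟫ = ⟪(x : H), P y⟫)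
    (hDc : Dc ≤ P.domain) (hQDc : ∀ φ ∈ Dc, Q φ ∈ Dc)
    (hccr : ∀ φ (hφ : φ ∈ Dc),
      Q (P ⟨φ, hDc hφ⟩) - P ⟨Q φ, hDc (hQDc φ hφ)⟩ = Complex.I • φ)
    (hclosed : IsClosed {p : H × H | ∃ hp : p.1 ∈ Dc, P ⟨p.1, hDc hp⟩ = p.2})
    (hDcdense : Dense (Dc : Set H)) {β p : ℝ} (hinv : IsInvParam Q P Dc β)
    (hp : p ∈ realPointSpectrum P) : p - β ∈ realPointSpectrum P := by
  obtain ⟨φ, hφ, hne, heig⟩ := hp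
  have hU : Uop Q β φ ∈ P.domain := by
    by_cases hφDc : φ ∈ Dc
    · exact hDc (exists_Uop_mem_and_apply hDc hQDc hccr hclosed β hφDc).1
    · exact (hinv φ hφ hφDc).1
  refine ⟨Uop Q β φ, hU, ?_,
    apply_Uop_of_eigen hQ hPsymm hDc hQDc hccr hclosed hDcdense heig hU⟩
  rwa [← norm_ne_zero_iff,
    ContinuousLinearMap.norm_map_of_mem_unitary (Uop_mem_unitary hQ β), norm_ne_zero_iff]

end Hilbert

theorem no_symmetric_invariance_pair_for_semibounded_point_spectrum_general
    {H : Type*} [NormedAddCommGroup H] [InnerProductSpace ℂ H] [CompleteSpace H]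
    (Q : H →L[ℂ] H) (hQ : IsSelfAdjoint Q)
    (P : H →ₗ.[ℂ] H)
    (hPsymm : ∀ x y : P.domain, ⟪P x, (y : H)⟫ = ⟪(x : H), P y⟫)
    (Dc : Submodule ℂ H) (hDc : Dc ≤ P.domain)
    (hQDc : ∀ φ ∈ Dc, Q φ ∈ Dc)
    (hccr : ∀ φ (hφ : φ ∈ Dc),
      Q (P ⟨φ, hDc hφ⟩) - P ⟨Q φ, hDc (hQDc φ hφ)⟩ = Complex.I • φ)
    (hclosed : IsClosed {p : H × H | ∃ hp : p.1 ∈ Dc, P ⟨p.1, hDc hp⟩ = p.2})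
    (hDcdense : Dense (Dc : Set H))
    (hpoint : ∃ (φ₀ : H) (hφ₀ : φ₀ ∈ P.domain) (p₀ : ℝ),
      φ₀ ≠ 0 ∧ P ⟨φ₀, hφ₀⟩ = ((p₀ : ℂ)) • φ₀)
    (hbdd : BddBelow {p : ℝ | ∃ (φ : H) (hφ : φ ∈ P.domain),
      φ ≠ 0 ∧ P ⟨φ, hφ⟩ = ((p : ℂ)) • φ}) :
    ∀ β₀ : ℝ, β₀ ≠ 0 →
      ¬ (IsInvParam Q P Dc β₀ ∧ IsInvParam Q P Dc (-β₀)) := by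
  rintro β₀ hβ₀ ⟨hinv, hinv_neg⟩
  obtain ⟨β, hβ, hβinv⟩ : ∃ β > 0, IsInvParam Q P Dc β := by
    rcases hβ₀.lt_or_gt with hneg | hpos
    exacts [⟨-β₀, neg_pos.2 hneg, hinv_neg⟩, ⟨β₀, hpos, hinv⟩]
  obtain ⟨φ₀, hφ₀, p₀, hne, heig⟩ := hpoint
  exact not_bddBelow_of_forall_sub_mem (s := realPointSpectrum P) hβ ⟨φ₀, hφ₀, hne, heig⟩
    (fun _ => sub_mem_realPointSpectrum hQ hPsymm hDc hQDc hccr hclosed hDcdense hβinv) hbdd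

theorem no_symmetric_invariance_pair_for_semibounded_point_spectrum
    {H : Type*} [NormedAddCommGroup H] [InnerProductSpace ℂ H] [CompleteSpace H]
    (Q : H →L[ℂ] H) (hQ : IsSelfAdjoint Q)
    (P : H →ₗ.[ℂ] H)
    (hPsymm : ∀ x y : P.domain, ⟪P x, (y : H)⟫ = ⟪(x : H), P y⟫)
    (hPdense : Dense (P.domain : Set H))
    (Dc : Submodule ℂ H) (hDc : Dc ≤ P.domain)
    (hQDc : ∀ φ ∈ Dc, Q φ ∈ Dc)
    (hccr : ∀ φ (hφ : φ ∈ Dc),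
      Q (P ⟨φ, hDc hφ⟩) - P ⟨Q φ, hDc (hQDc φ hφ)⟩ = Complex.I • φ)
    (hclosed : IsClosed {p : H × H | ∃ hp : p.1 ∈ Dc, P ⟨p.1, hDc hp⟩ = p.2})
    (hDcdense : Dense (Dc : Set H))
    (hpoint : ∃ (φ₀ : H) (hφ₀ : φ₀ ∈ P.domain) (p₀ : ℝ),
      φ₀ ≠ 0 ∧ P ⟨φ₀, hφ₀⟩ = ((p₀ : ℂ)) • φ₀)
    (hbdd : BddBelow {p : ℝ | ∃ (φ : H) (hφ : φ ∈ P.domain),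
      φ ≠ 0 ∧ P ⟨φ, hφ⟩ = ((p : ℂ)) • φ}) :
    ∀ β₀ : ℝ, β₀ ≠ 0 →
      ¬ (IsInvParam Q P Dc β₀ ∧ IsInvParam Q P Dc (-β₀)) :=
  no_symmetric_invariance_pair_for_semibounded_point_spectrum_general Q hQ P hPsymm Dc hDc hQDc hccr
    hclosed hDcdense hpoint hbdd
end
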